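/- arXiv:1904.07563 — 5 statements merged into one kernel-verified Lean document; each statement's English description precedes it below -/
import Mathlib

section
/- For N = 2, uMPS(D, d, 2) equals the set of symmetric d × d complex matrices of rank at most D², under the identification (ℂ^d)^{⊗2} ≅ ℂ^{d×d}. In particular, uMPS(D, d, 2) is a closed set. -/
open Matrix BigOperators

/-- The coefficient tensor of the uniform matrix product state
`T_N(M_0,…,M_{d-1}) = Σ tr(M_{i_1} ⋯ M_{i_N}) e_{i_1} ⊗ ⋯ ⊗ e_{i_N}`,
identified with its coefficient function `(Fin N → Fin d) → ℂ`. -/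
noncomputable def uT (D d N : ℕ) (M : Fin d → Matrix (Fin D) (Fin D) ℂ) :
    (Fin N → Fin d) → ℂ :=
  fun v => Matrix.trace (List.ofFn fun k => M (v k)).prod

/-- The set of uniform matrix product states in `(ℂ^d)^{⊗N}`. -/
noncomputable def uMPS (D d N : ℕ) : Set ((Fin N → Fin d) → ℂ) :=
  Set.range (uT D d N)

/-!
For `N = 2` the tensor `uT M` is the Gram matrix `(tr (M i * M j))` of the trace form on
`D × D` matrices, so it is symmetric of rank at most `D²`. Conversely, over `ℂ` a symmetric
matrix of rank `r` is congruent to a diagonal one and hence factors as `G * Gᵀ` with `r` columns,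
and the trace form is congruent to the dot product on `ℂ^{D²}` via
`X ↦ α • (X + i • Xᵀ)` with `α² = (2i)⁻¹`. Closedness follows because both symmetry and the
bound on the rank are closed conditions, the latter since rank is lower semicontinuous.
-/

namespace Matrix

theorem isClosed_setOf_rank_le {𝕜 : Type*} [NontriviallyNormedField 𝕜] [CompleteSpace 𝕜]
    {m n : Type*} [Fintype m] [Fintype n] [DecidableEq n] (r : ℕ) :
    IsClosed {A : Matrix m n 𝕜 | A.rank ≤ r} := by
  let toCLM : Matrix m n 𝕜 →ₗ[𝕜] (n → 𝕜) →L[𝕜] (m → 𝕜) :=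
    LinearMap.toContinuousLinearMap.toLinearMap ∘ₗ toLin'.toLinearMap
  have hrank : ∀ A : Matrix m n 𝕜,
      (A.rank : Cardinal) = (toCLM A : (n → 𝕜) →ₗ[𝕜] (m → 𝕜)).rank := by
    intro A
    simp only [toCLM, Matrix.rank, LinearMap.rank, ← Module.finrank_eq_rank]
    rfl
  rw [← isOpen_compl_iff]
  convert (isOpen_setOfPred_nat_le_rank (r + 1)).preimage toCLM.continuous_of_finiteDimensional
  ext A
  simp [← hrank]

theorem exists_mul_transpose_eq_of_card_le {R m ι κ : Type*} [CommSemiring R] [Fintype ι]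
    [Fintype κ] [DecidableEq κ] (H : Matrix m ι R) (h : Fintype.card ι ≤ Fintype.card κ) :
    ∃ G : Matrix m κ R, G * Gᵀ = H * Hᵀ := by
  classical
  obtain ⟨f⟩ := Function.Embedding.nonempty_of_card_le h
  refine ⟨H * (1 : Matrix κ κ R).submatrix f id, ?_⟩
  rw [transpose_mul, Matrix.mul_assoc, ← Matrix.mul_assoc _ _ Hᵀ, transpose_submatrix,
    transpose_one, ← submatrix_mul _ _ _ _ _ Function.bijective_id, Matrix.one_mul,
    submatrix_one_embedding, Matrix.one_mul]

theorem trace_add_smul_transpose_mul_add_smul_transpose {R n : Type*} [CommRing R] [Fintype n]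
    {i : R} (hi : i * i = -1) (u v : Matrix n n R) :
    trace ((u + i • uᵀ) * (v + i • vᵀ)) = 2 * i * trace (uᵀ * v) := by
  have h₁ : trace (uᵀ * vᵀ) = trace (u * v) := trace_transpose_mul u v
  have h₂ : trace (u * vᵀ) = trace (uᵀ * v) := by
    rw [← trace_transpose, transpose_mul, transpose_transpose, trace_mul_comm]
  simp only [Matrix.add_mul, Matrix.mul_add, Matrix.smul_mul, Matrix.mul_smul, trace_add,
    trace_smul, h₁, h₂, smul_eq_mul]
  linear_combination trace (u * v) * hi

variable {K m : Type*} [Field K] [Fintype m] [DecidableEq m]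

theorem IsSymm.exists_eq_transpose_mul_diagonal_mul [Invertible (2 : K)] {S : Matrix m m K}
    (hS : S.IsSymm) : ∃ (P : Matrix m m K) (w : m → K), IsUnit P ∧ S = Pᵀ * diagonal w * P := by
  have hB : (toBilin' S).IsSymm := by
    rw [← LinearMap.BilinForm.isSymm_toMatrix_iff_isSymm (Pi.basisFun K m),
      LinearMap.BilinForm.toMatrix_basisFun, LinearMap.BilinForm.toMatrix'_toBilin']
    exact hS
  obtain ⟨v, hv⟩ := LinearMap.BilinForm.exists_orthogonal_basis
    (LinearMap.BilinForm.isSymm_iff.mp hB)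
  let e := Fintype.equivFinOfCardEq (Module.finrank_fintype_fun_eq_card K (η := m)).symm
  let c := v.reindex e.symm
  have hc : ∀ k l, k ≠ l → toBilin' S (c k) (c l) = 0 := fun k l hkl => by
    simpa only [c, Module.Basis.reindex_apply, Equiv.symm_symm] using hv (e.injective.ne hkl)
  have hQP : (Pi.basisFun K m).toMatrix c * c.toMatrix (Pi.basisFun K m) = 1 :=
    Module.Basis.toMatrix_mul_toMatrix_flip _ _
  have hdiag : ((Pi.basisFun K m).toMatrix c)ᵀ * S * (Pi.basisFun K m).toMatrix c =
      diagonal fun k => toBilin' S (c k) (c k) := by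
    conv_lhs => rw [← LinearMap.BilinForm.toMatrix'_toBilin' S,
      ← LinearMap.BilinForm.toMatrix_basisFun, LinearMap.BilinForm.toMatrix_mul_basis_toMatrix]
    ext k l
    rw [LinearMap.BilinForm.toMatrix_apply, diagonal_apply]
    split_ifs with h
    · rw [h]
    · exact hc k l h
  refine ⟨c.toMatrix (Pi.basisFun K m), fun k => toBilin' S (c k) (c k),
    .of_mul_eq_one_right _ hQP, ?_⟩
  rw [← hdiag, ← Matrix.mul_assoc, ← Matrix.mul_assoc, ← transpose_mul, hQP, transpose_one,
    Matrix.one_mul, Matrix.mul_assoc, hQP, Matrix.mul_one]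

theorem IsSymm.exists_eq_mul_transpose [IsAlgClosed K] [Invertible (2 : K)] {κ : Type*}
    [Fintype κ] {S : Matrix m m K} (hS : S.IsSymm) (hr : S.rank ≤ Fintype.card κ) :
    ∃ G : Matrix m κ K, S = G * Gᵀ := by
  classical
  obtain ⟨P, w, hP, rfl⟩ := hS.exists_eq_transpose_mul_diagonal_mul
  have hPdet : IsUnit P.det := (isUnit_iff_isUnit_det P).mp hP
  rw [rank_mul_eq_left_of_isUnit_det _ _ hPdet,
    rank_mul_eq_right_of_isUnit_det _ _ (by rwa [det_transpose]), rank_diagonal] at hr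
  choose s hs using fun k => IsAlgClosed.exists_pow_nat_eq (w k) two_pos
  obtain ⟨G, hG⟩ := exists_mul_transpose_eq_of_card_le
    (of fun i (k : {k // w k ≠ 0}) => s k * P k i) hr
  refine ⟨G, ?_⟩
  ext i j
  rw [hG]
  have hzero : ∑ k : {k // ¬w k ≠ 0}, P k i * w k * P k j = 0 :=
    Finset.sum_eq_zero fun k _ => by simp [not_not.mp k.2]
  rw [mul_apply]
  simp only [mul_diagonal]
  simp only [mul_apply, transpose_apply, of_apply]
  rw [← Fintype.sum_subtype_add_sum_subtype (fun k => w k ≠ 0), hzero, add_zero]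
  exact Finset.sum_congr rfl fun k _ => by rw [← hs]; ring

end Matrix

def traceGram {R ι n : Type*} [CommRing R] [Fintype n] (M : ι → Matrix n n R) : Matrix ι ι R :=
  of fun a b => trace (M a * M b)

section TraceGram

variable {ι n : Type*} [Fintype n]

theorem traceGram_isSymm {R : Type*} [CommRing R] (M : ι → Matrix n n R) :
    (traceGram M).IsSymm :=
  ext fun a b => trace_mul_comm (M b) (M a)

theorem rank_traceGram_le {R : Type*} [CommRing R] [StrongRankCondition R] [Fintype ι]
    (M : ι → Matrix n n R) : (traceGram M).rank ≤ Fintype.card n ^ 2 := by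
  have hfac : traceGram M =
      (of fun a (p : n × n) => M a p.1 p.2) * of fun (p : n × n) b => M b p.2 p.1 := by
    ext a b
    simp [traceGram, trace, mul_apply, Fintype.sum_prod_type]
  calc (traceGram M).rank ≤ (of fun a (p : n × n) => M a p.1 p.2).rank := by
        rw [hfac]; exact rank_mul_le_left _ _
    _ ≤ Fintype.card (n × n) := rank_le_card_width _
    _ = Fintype.card n ^ 2 := by rw [Fintype.card_prod, sq]

variable {K : Type*} [Field K] [IsAlgClosed K] [Invertible (2 : K)]

theorem exists_traceGram_eq_mul_transpose (G : Matrix ι (n × n) K) :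
    ∃ M : ι → Matrix n n K, traceGram M = G * Gᵀ := by
  obtain ⟨i, hi⟩ := IsAlgClosed.exists_eq_mul_self (-1 : K)
  have h2i : (2 * i : K) ≠ 0 :=
    mul_ne_zero (Invertible.ne_zero 2) fun h => by simp [h] at hi
  obtain ⟨α, hα⟩ := IsAlgClosed.exists_eq_mul_self (2 * i)⁻¹
  let R : ι → Matrix n n K := fun a => of fun x y => G a (x, y)
  refine ⟨fun a => α • (R a + i • (R a)ᵀ), ?_⟩
  ext a b
  calc trace ((α • (R a + i • (R a)ᵀ)) * (α • (R b + i • (R b)ᵀ)))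
      = α * α * (2 * i * trace ((R a)ᵀ * R b)) := by
        rw [smul_mul_smul_comm, trace_smul,
          trace_add_smul_transpose_mul_add_smul_transpose hi.symm, smul_eq_mul]
    _ = trace ((R a)ᵀ * R b) := by rw [← hα, ← mul_assoc, inv_mul_cancel₀ h2i, one_mul]
    _ = (G * Gᵀ) a b := by
        simp only [trace, diag, mul_apply, transpose_apply, of_apply, R, Fintype.sum_prod_type]
        exact Finset.sum_comm

theorem exists_traceGram_eq_iff [Fintype ι] [DecidableEq ι] {S : Matrix ι ι K} :
    (∃ M : ι → Matrix n n K, traceGram M = S) ↔ S.IsSymm ∧ S.rank ≤ Fintype.card n ^ 2 := by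
  constructor
  · rintro ⟨M, rfl⟩
    exact ⟨traceGram_isSymm M, rank_traceGram_le M⟩
  · rintro ⟨hS, hr⟩
    obtain ⟨G, rfl⟩ := hS.exists_eq_mul_transpose (κ := n × n) (by rwa [Fintype.card_prod, ← sq])
    exact exists_traceGram_eq_mul_transpose G

end TraceGram

theorem uT_two_eq_iff {D d : ℕ} {M : Fin d → Matrix (Fin D) (Fin D) ℂ}
    {T : (Fin 2 → Fin d) → ℂ} :
    uT D d 2 M = T ↔ traceGram M = of fun i j => T ![i, j] := by
  have huT : ∀ v, uT D d 2 M v = traceGram M (v 0) (v 1) := fun v => by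
    simp [uT, traceGram, List.ofFn_succ]
  constructor
  · rintro rfl
    ext i j
    simp [huT]
  · intro h
    funext v
    rw [huT, h, of_apply]
    congr
    funext k
    fin_cases k <;> rfl

/-- `uMPS(D,d,2)` consists exactly of the symmetric `d × d` matrices of rank at most `D²`
(under the identification `(ℂ^d)^{⊗2} ≅ ℂ^{d×d}`), and in particular it is closed. -/
theorem stmt_9 (D d : ℕ) :
    uMPS D d 2 = {T | (Matrix.of fun i j => T ![i, j]).IsSymm ∧
        (Matrix.of fun i j => T ![i, j]).rank ≤ D ^ 2} ∧
    IsClosed (uMPS D d 2) := by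
  have hset : uMPS D d 2 = {T | (Matrix.of fun i j => T ![i, j]).IsSymm ∧
      (Matrix.of fun i j => T ![i, j]).rank ≤ D ^ 2} := by
    ext T
    simpa only [uMPS, Set.mem_range, Set.mem_ofPred_eq, Fintype.card_fin] using (exists_congr fun M => uT_two_eq_iff).trans
      (exists_traceGram_eq_iff (S := of fun i j => T ![i, j]))
  refine ⟨hset, ?_⟩
  have hcont : Continuous fun T : (Fin 2 → Fin d) → ℂ => of fun i j => T ![i, j] :=
    continuous_matrix fun i j => continuous_apply _
  rw [hset]
  exact ((isClosed_eq continuous_id.matrix_transpose continuous_id).inter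
    (isClosed_setOf_rank_le _)).preimage hcont
end

section
/- Let N ≥ 3 and ζ ∈ ℂ with ζ^N = -1. For λ ≠ 0, let M_{0,λ} = λ^{-1}·diag(1, ζ) and M_{1,λ} = λ^{N-1}·diag(1, -ζ). Then T_N(M_{0,λ}, M_{1,λ}) converges, as λ → 0, to 2W_N, where W_N = e_{0⋯01} is the W-state. Hence the W-state 2W_N lies in the Euclidean closure of uMPS(2, 2, N). -/
open Matrix BigOperators

/-- The `W`-state `W_N = e_{0⋯01}`: the coefficient tensor which is `1` exactly on the
`N` cyclic permutations of `(0,…,0,1)`. -/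
noncomputable def Wstate (N : ℕ) : (Fin N → Fin 2) → ℂ :=
  fun v => if (Finset.univ.filter fun k => v k = 1).card = 1 then 1 else 0

lemma diag_list_prod {n : Type*} [Fintype n] [DecidableEq n] :
    ∀ (L : List (n → ℂ)), (L.map Matrix.diagonal).prod = Matrix.diagonal L.prod := by
  intro L
  induction L with
  | nil =>
      simp only [List.map_nil, List.prod_nil]
      exact (Matrix.diagonal_one).symm
  | cons a L ih =>
      simp only [List.map_cons, List.prod_cons, ih, Matrix.diagonal_mul_diagonal]
      rfl

lemma uT_eval (N : ℕ) (ζ lam : ℂ) (v : Fin N → Fin 2) :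
    uT 2 2 N ![lam⁻¹ • Matrix.diagonal ![1, ζ], lam ^ (N - 1) • Matrix.diagonal ![1, -ζ]] v
      = lam ^ ((N - 1) * (Finset.univ.filter fun k => v k = 1).card)
        * lam⁻¹ ^ (N - (Finset.univ.filter fun k => v k = 1).card)
        * (1 + (-1) ^ (Finset.univ.filter fun k => v k = 1).card * ζ ^ N) := by
  classical
  set K := (Finset.univ.filter fun k => v k = 1).card with hKdef
  have hK : K ≤ N := by
    have := Finset.card_filter_le (Finset.univ : Finset (Fin N)) (fun k => v k = 1)
    simpa using this
  set W : Fin 2 → Fin 2 → ℂ := ![lam⁻¹ • ![1, ζ], lam ^ (N - 1) • ![1, -ζ]] with hW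
  have hM : ∀ i : Fin 2,
      (![lam⁻¹ • Matrix.diagonal ![1, ζ], lam ^ (N - 1) • Matrix.diagonal ![1, -ζ]]) i
        = Matrix.diagonal (W i) := by
    intro i
    fin_cases i <;> exact (Matrix.diagonal_smul _ _).symm
  unfold uT
  have h1 : (List.ofFn fun k => (![lam⁻¹ • Matrix.diagonal ![1, ζ],
      lam ^ (N - 1) • Matrix.diagonal ![1, -ζ]]) (v k))
      = (List.ofFn fun k => W (v k)).map Matrix.diagonal := by
    simp only [List.map_ofFn, Function.comp]
    exact congrArg _ (funext fun k => hM (v k))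
  rw [h1, diag_list_prod, Matrix.trace_diagonal]
  have h2 : ∀ j : Fin 2, (List.ofFn fun k => W (v k)).prod j = ∏ k, W (v k) j := by
    intro j
    rw [Pi.list_prod_apply, List.map_ofFn, List.prod_ofFn]
    rfl
  have hsplit : ∀ j : Fin 2, (∏ k, W (v k) j) = (W 1 j) ^ K * (W 0 j) ^ (N - K) := by
    intro j
    rw [← Finset.prod_filter_mul_prod_filter_not Finset.univ (fun k => v k = 1)]
    congr 1
    · rw [Finset.prod_congr rfl (fun k hk => by rw [(Finset.mem_filter.mp hk).2]),
        Finset.prod_const]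
    · have hc : (Finset.univ.filter fun k => ¬ v k = 1).card = N - K := by
        have := Finset.card_filter_add_card_filter_not
          (s := (Finset.univ : Finset (Fin N))) (p := fun k => v k = 1)
        simp only [Finset.card_univ, Fintype.card_fin] at this
        omega
      rw [Finset.prod_congr rfl (fun k hk => by
          have h0 : v k = 0 := by
            have := (Finset.mem_filter.mp hk).2
            omega
          rw [h0]),
        Finset.prod_const, hc]
  rw [Fin.sum_univ_two, h2 0, h2 1, hsplit 0, hsplit 1]
  have hz : ζ ^ K * ζ ^ (N - K) = ζ ^ N := by
    rw [← pow_add]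
    congr 1
    omega
  have hW10 : W 1 0 = lam ^ (N - 1) := by simp [hW]
  have hW00 : W 0 0 = lam⁻¹ := by simp [hW]
  have hW11 : W 1 1 = lam ^ (N - 1) * (-ζ) := by simp [hW]
  have hW01 : W 0 1 = lam⁻¹ * ζ := by simp [hW]
  rw [hW10, hW00, hW11, hW01, pow_mul, ← hz]
  ring
/-- `T_N(λ⁻¹·diag(1,ζ), λ^{N-1}·diag(1,-ζ))` converges to `2W_N` as `λ → 0`
(where `ζ^N = -1`); hence `2W_N` lies in the closure of `uMPS(2,2,N)`. -/
theorem stmt_11 (N : ℕ) (hN : 3 ≤ N) (ζ : ℂ) (hζ : ζ ^ N = -1) :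
    Filter.Tendsto
      (fun lam : ℂ => uT 2 2 N
        ![lam⁻¹ • Matrix.diagonal ![1, ζ], lam ^ (N - 1) • Matrix.diagonal ![1, -ζ]])
      (nhdsWithin 0 {0}ᶜ) (nhds (fun v => 2 * Wstate N v)) ∧
    (fun v => 2 * Wstate N v) ∈ closure (uMPS 2 2 N) := by
  classical
  have hT : Filter.Tendsto
      (fun lam : ℂ => uT 2 2 N
        ![lam⁻¹ • Matrix.diagonal ![1, ζ], lam ^ (N - 1) • Matrix.diagonal ![1, -ζ]])
      (nhdsWithin 0 {0}ᶜ) (nhds (fun v => 2 * Wstate N v)) := by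
    rw [tendsto_pi_nhds]
    intro v
    simp only [uT_eval N ζ _ v]
    set K := (Finset.univ.filter fun k => v k = 1).card with hKdef
    have hK : K ≤ N := by
      have := Finset.card_filter_le (Finset.univ : Finset (Fin N)) (fun k => v k = 1)
      simpa using this
    rw [hζ]
    rcases Nat.lt_or_ge K 2 with hK2 | hK2
    · interval_cases K
      · -- K = 0 : coefficient 1 + 1 * (-1) = 0
        have hcoef : (1 : ℂ) + (-1) ^ (0:ℕ) * (-1) = 0 := by norm_num
        have hfun : (fun lam : ℂ => lam ^ ((N-1) * 0) * lam⁻¹ ^ (N - 0)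
            * (1 + (-1) ^ (0:ℕ) * (-1))) = fun _ => (0:ℂ) := by
          funext lam; rw [hcoef, mul_zero]
        rw [hfun]
        have hW0 : (2 : ℂ) * Wstate N v = 0 := by
          simp [Wstate, ← hKdef]
        rw [hW0]
        exact tendsto_const_nhds
      · -- K = 1 : function is eventually the constant 2
        have hW1 : (2 : ℂ) * Wstate N v = 2 := by
          simp [Wstate, ← hKdef]
        rw [hW1]
        refine Filter.Tendsto.congr' ?_ (tendsto_const_nhds (α := ℂ))
        filter_upwards [self_mem_nhdsWithin] with lam hlam
        have hl : lam ≠ 0 := hlam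
        have : lam ^ (N - 1) * lam⁻¹ ^ (N - 1) = 1 := by
          rw [← mul_pow, mul_inv_cancel₀ hl, one_pow]
        rw [mul_one, pow_one, this]
        norm_num
    · -- K ≥ 2 : function is eventually lam ^ (N*(K-1)) * c, which tends to 0
      have hW0 : (2 : ℂ) * Wstate N v = 0 := by
        have : ¬ K = 1 := by omega
        simp [Wstate, ← hKdef, this]
      rw [hW0]
      set c : ℂ := 1 + (-1) ^ K * (-1) with hc
      have hexp : (N - 1) * K = N * (K - 1) + (N - K) := by
        zify [show 1 ≤ N by omega, show 1 ≤ K by omega, hK]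
        ring
      have hev : (fun lam : ℂ => lam ^ ((N-1) * K) * lam⁻¹ ^ (N - K) * c)
          =ᶠ[nhdsWithin 0 {0}ᶜ] fun lam : ℂ => lam ^ (N * (K - 1)) * c := by
        filter_upwards [self_mem_nhdsWithin] with lam hlam
        have hl : lam ≠ 0 := hlam
        have h1 : lam ^ (N - K) * lam⁻¹ ^ (N - K) = 1 := by
          rw [← mul_pow, mul_inv_cancel₀ hl, one_pow]
        rw [hexp, pow_add, mul_assoc (lam ^ (N * (K - 1))), h1, mul_one]
      refine Filter.Tendsto.congr' hev.symm ?_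
      have hlim : Filter.Tendsto (fun lam : ℂ => lam ^ (N * (K - 1)) * c)
          (nhds 0) (nhds ((0 : ℂ) ^ (N * (K - 1)) * c)) :=
        ((continuous_pow (N * (K - 1))).tendsto 0).mul_const c
      have h0 : (0 : ℂ) ^ (N * (K - 1)) * c = 0 := by
        rw [zero_pow (Nat.mul_ne_zero (by omega) (by omega)), zero_mul]
      rw [h0] at hlim
      exact hlim.mono_left nhdsWithin_le_nhds
  exact ⟨hT, mem_closure_of_tendsto hT
    (Filter.Eventually.of_forall fun lam => ⟨_, rfl⟩)⟩
end

section
/- The tensor T = e_0 ⊗ e_1 ⊗ e_2 + e_1 ⊗ e_2 ⊗ e_0 + e_2 ⊗ e_0 ⊗ e_1 ∈ (ℂ³)^{⊗3} lies in the Euclidean closure of uMPS(2, 3, 3). Explicitly, with M_{0,λ} = λ²·E_{11}, M_{1,λ} = λ^{-1}·E_{12}, M_{2,λ} = λ^{-1}·E_{21} (where E_{ij} are 2×2 matrix units), one has T_3(M_{0,λ}, M_{1,λ}, M_{2,λ}) = λ⁶ e_{000} + e_{012}, which converges to T as λ → 0. -/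
/-! The trace of a product of matrix units `E_{ab} E_{cd} E_{ef}` is `1` when
`b = c`, `d = e`, `f = a` and `0` otherwise. For the deformed triple the only
such words are `000`, with weight `(λ²)³ = λ⁶`, and the cyclic rotations of `012`, whose weights
`λ² · λ⁻¹ · λ⁻¹ = 1` do not depend on `λ`. Letting `λ → 0` leaves `e_{012}`. -/

open Matrix BigOperators

/-- The coefficient tensor of `e_{000} = e_0 ⊗ e_0 ⊗ e_0`. -/
noncomputable def e000 : (Fin 3 → Fin 3) → ℂ :=
  fun v => if v = ![0, 0, 0] then 1 else 0

/-- The coefficient tensor of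
`e_{012} = e_0 ⊗ e_1 ⊗ e_2 + e_1 ⊗ e_2 ⊗ e_0 + e_2 ⊗ e_0 ⊗ e_1`. -/
noncomputable def e012 : (Fin 3 → Fin 3) → ℂ :=
  fun v => (if v = ![0, 1, 2] then 1 else 0) + (if v = ![1, 2, 0] then 1 else 0) +
    (if v = ![2, 0, 1] then 1 else 0)

open Filter Topology

theorem uT_three_apply {D d : ℕ} (M : Fin d → Matrix (Fin D) (Fin D) ℂ) (v : Fin 3 → Fin d) :
    uT D d 3 M v = (M (v 0) * M (v 1) * M (v 2)).trace := by
  simp [uT, List.ofFn_succ, Matrix.mul_assoc]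

theorem uT_deformation (lam : ℂ) (hlam : lam ≠ 0) :
    uT 2 3 3 ![lam ^ 2 • Matrix.single 0 0 (1 : ℂ),
        lam⁻¹ • Matrix.single 0 1 (1 : ℂ),
        lam⁻¹ • Matrix.single 1 0 (1 : ℂ)] =
      fun v => lam ^ 6 * e000 v + e012 v := by
  funext v
  obtain ⟨i, j, k, rfl⟩ : ∃ i j k, v = ![i, j, k] :=
    ⟨v 0, v 1, v 2, by funext n; fin_cases n <;> rfl⟩
  rw [uT_three_apply]
  fin_cases i <;> fin_cases j <;> fin_cases k <;>
    simp [e000, e012, funext_iff, Fin.forall_fin_succ] <;> field_simp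

theorem tendsto_pow_six_smul_e000_add_e012 :
    Tendsto (fun lam : ℂ => lam ^ 6 • e000 + e012) (𝓝[≠] 0) (𝓝 e012) := by
  refine tendsto_nhdsWithin_of_tendsto_nhds ?_
  have hcont : Continuous fun lam : ℂ => lam ^ 6 • e000 + e012 := by fun_prop
  simpa using hcont.tendsto 0

/-- With `M_{0,λ} = λ²E_{11}`, `M_{1,λ} = λ⁻¹E_{12}`, `M_{2,λ} = λ⁻¹E_{21}` one has
`T_3(M_{0,λ}, M_{1,λ}, M_{2,λ}) = λ⁶e_{000} + e_{012}`; hence `e_{012}` lies in the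
closure of `uMPS(2,3,3)`. -/
theorem stmt_12 :
    (∀ lam : ℂ, lam ≠ 0 →
      uT 2 3 3 ![lam ^ 2 • Matrix.single 0 0 (1 : ℂ),
          lam⁻¹ • Matrix.single 0 1 (1 : ℂ),
          lam⁻¹ • Matrix.single 1 0 (1 : ℂ)] =
        fun v => lam ^ 6 * e000 v + e012 v) ∧
    e012 ∈ closure (uMPS 2 3 3) := by
  refine ⟨uT_deformation, mem_closure_of_tendsto tendsto_pow_six_smul_e000_add_e012 ?_⟩
  filter_upwards [self_mem_nhdsWithin] with lam hlam
  exact ⟨_, uT_deformation lam hlam⟩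
end

section
/- The W-state W_N = e_{0⋯01} does not belong to uMPS(2, 2, N) for any N > 3. -/
/-!
If `T_N(A, B) = W_N`, reading off the coefficients at the words `0^N`, `1 0^(N-1)`,
`1 0^p 1 0^q` and `1 1 0^p 1 0^q` gives trace identities that survive simultaneous conjugation,
so `A` may be put in normal form.

If `A` has a double eigenvalue `l`, then `tr A^N = 2 l^N = 0` makes `A` nilpotent, against
`tr (B A^(N-1)) = 1`. Otherwise `A = diag(l, m)` and, writing `B = [[a, b], [c, d]]`, the
identities are polynomial equations in `l, m, a, d` and `bc`.
* If `bc = 0`, the sums `S_k = a^k l^(N-k) + d^k m^(N-k)` are `0, 1, 0, 0` for `k = 0, …, 3`.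
  The Hankel determinants give `S₀S₂ - S₁² = -1` and `S₁S₃ - S₂² = 0`, which factor as
  `l^(N-2) m^(N-2) (dl - am)² = -1` and `ad · l^(N-3) m^(N-3) (dl - am)² = 0`; so `ad = 0`,
  and then `S₂ = 0` contradicts the first equation.
* If `bc ≠ 0`, comparing the identities for different splittings `p + q` gives
  `l^(N-3) = m^(N-3)`, `l² = m²`, and (as `tr (B A^(N-1)) = (a + d) l^(N-1) ≠ 0`)
  `l^(N-4) = m^(N-4)`; together these force `l = m`, which `tr A^N = 0` excludes.
-/

open Matrix BigOperators

lemma List.prod_map_units_conj {α : Type*} [Monoid α] (u : αˣ) (L : List α) :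
    (L.map fun x => (↑u⁻¹ : α) * x * u).prod = ↑u⁻¹ * L.prod * u := by
  induction L with
  | nil => simp
  | cons a t ih =>
    rw [List.map_cons, List.prod_cons, ih, List.prod_cons]
    simp only [mul_assoc, Units.mul_inv_cancel_left]

namespace Matrix

section NormalForm

variable {K : Type*} [Field K]

lemma exists_units_conj_eq_of_mul_eq {n : Type*} [Fintype n] [DecidableEq n]
    {A P T : Matrix n n K} (hP : P.det ≠ 0) (h : A * P = P * T) :
    ∃ u : (Matrix n n K)ˣ, (↑u⁻¹ : Matrix _ _ _) * A * (u : Matrix _ _ _) = T := by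
  obtain ⟨u, rfl⟩ := (isUnit_iff_isUnit_det P).mpr hP.isUnit
  exact ⟨u, by rw [mul_assoc, h, ← mul_assoc, Units.inv_mul, one_mul]⟩

lemma exists_units_conj_eq_upperTriangular [IsAlgClosed K] (A : Matrix (Fin 2) (Fin 2) K) :
    ∃ (u : (Matrix (Fin 2) (Fin 2) K)ˣ) (l b m : K),
      (↑u⁻¹ : Matrix _ _ _) * A * (u : Matrix _ _ _) = !![l, b; 0, m] := by
  obtain ⟨l, hl⟩ := IsAlgClosed.exists_root A.charpoly (by simp [charpoly_degree_eq_dim])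
  obtain ⟨a, b, c, d, rfl⟩ : ∃ a b c d, A = !![a, b; c, d] := ⟨_, _, _, _, eta_fin_two A⟩
  have hchar : l ^ 2 - (a + d) * l + (a * d - b * c) = 0 := by
    simpa [charpoly_fin_two, trace_fin_two, det_fin_two] using hl
  rcases eq_or_ne c 0 with rfl | hc
  · exact ⟨1, a, b, d, by simp⟩
  · -- the first column of the conjugating matrix is an eigenvector for `l`
    obtain ⟨u, hu⟩ := exists_units_conj_eq_of_mul_eq (A := !![a, b; c, d])
      (P := !![l - d, 1; c, 0]) (T := !![l, 1; 0, a + d - l])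
      (by simpa [det_fin_two] using hc)
      (by
        ext i j; fin_cases i <;> fin_cases j <;> simp
        · linear_combination -hchar
        · ring)
    exact ⟨u, l, 1, a + d - l, hu⟩

lemma exists_units_conj_upperTriangular_eq_diagonal {l m : K} (b : K) (hlm : l ≠ m) :
    ∃ u : (Matrix (Fin 2) (Fin 2) K)ˣ,
      (↑u⁻¹ : Matrix _ _ _) * !![l, b; 0, m] * (u : Matrix _ _ _) = diagonal ![l, m] := by
  have hml : m - l ≠ 0 := sub_ne_zero.mpr hlm.symm
  refine exists_units_conj_eq_of_mul_eq (P := !![1, b / (m - l); 0, 1])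
    (by simp [det_fin_two]) ?_
  ext i j
  fin_cases i <;> fin_cases j <;> simp [diagonal_fin_two]; field_simp; ring

lemma exists_units_conj_eq_diagonal_or_eq_upperTriangular [IsAlgClosed K]
    (A : Matrix (Fin 2) (Fin 2) K) :
    ∃ u : (Matrix (Fin 2) (Fin 2) K)ˣ,
      (∃ l m, (↑u⁻¹ : Matrix _ _ _) * A * (u : Matrix _ _ _) = diagonal ![l, m]) ∨
        ∃ l b, (↑u⁻¹ : Matrix _ _ _) * A * (u : Matrix _ _ _) = !![l, b; 0, l] := by
  obtain ⟨u, l, b, m, hA⟩ := exists_units_conj_eq_upperTriangular A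
  rcases eq_or_ne l m with rfl | hlm
  · exact ⟨u, .inr ⟨l, b, hA⟩⟩
  · obtain ⟨v, hv⟩ := exists_units_conj_upperTriangular_eq_diagonal b hlm
    refine ⟨u * v, .inl ⟨l, m, ?_⟩⟩
    rw [← hv, ← hA, _root_.mul_inv_rev]
    simp only [Units.val_mul, mul_assoc]

end NormalForm

lemma upperTriangular_fin_two_pow_succ {R : Type*} [CommRing R] (l b : R) (k : ℕ) :
    !![l, b; 0, l] ^ (k + 1) = !![l ^ (k + 1), (k + 1) * l ^ k * b; 0, l ^ (k + 1)] := by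
  induction k with
  | zero => simp
  | succ k ih =>
    rw [pow_succ, ih, mul_fin_two]
    push_cast
    ring_nf

section Trace

variable {n R : Type*} [Fintype n] [DecidableEq n] [CommSemiring R]

lemma trace_mul_diagonal (B : Matrix n n R) (x : n → R) :
    trace (B * diagonal x) = ∑ i, B i i * x i := by
  simp only [trace, diag_apply, mul_diagonal]

lemma trace_mul_diagonal_mul_mul_diagonal (C B : Matrix n n R) (x y : n → R) :
    trace (C * diagonal x * B * diagonal y) = ∑ i, ∑ j, C i j * x j * B j i * y i := by
  simp only [trace_mul_diagonal, mul_apply (M := C * diagonal x), mul_diagonal, Finset.sum_mul]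

end Trace

end Matrix

lemma uT_units_conj (D d N : ℕ) (M : Fin d → Matrix (Fin D) (Fin D) ℂ)
    (u : (Matrix (Fin D) (Fin D) ℂ)ˣ) :
    uT D d N (fun i => (↑u⁻¹ : Matrix (Fin D) (Fin D) ℂ) * M i * u) = uT D d N M := by
  funext v
  simp only [uT]
  rw [List.ofFn_comp' (fun k => M (v k)) (fun x => u⁻¹.val * x * u.val),
    List.prod_map_units_conj, trace_units_conj']

lemma trace_prod_map_eq_Wstate {D N : ℕ} {M : Fin 2 → Matrix (Fin D) (Fin D) ℂ}
    (hM : uT D 2 N M = Wstate N) (w : List (Fin 2)) (hw : w.length = N) :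
    trace (w.map M).prod = if w.count 1 = 1 then 1 else 0 := by
  subst hw
  have hcount : (Finset.univ.filter fun k => w.get k = 1).card = w.count 1 :=
    Fin.card_filter_univ_eq_vector_get_eq_count 1 ⟨w, rfl⟩
  have h := congrFun hM w.get
  rwa [uT, List.ofFn_comp', List.ofFn_get, Wstate, hcount] at h

/-- The equations that `T_N(A, B) = W_N` imposes on the coefficients at the words `0^N`, `1 0^p`,
`1 0^p 1 0^q` and `1 1 0^p 1 0^q`. -/
structure WTraceConditions {D : ℕ} (N : ℕ) (A B : Matrix (Fin D) (Fin D) ℂ) : Prop where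
  trace_pow : trace (A ^ N) = 0
  trace_mul_pow : ∀ p, p + 1 = N → trace (B * A ^ p) = 1
  trace_two : ∀ p q, p + q + 2 = N → trace (B * A ^ p * B * A ^ q) = 0
  trace_three : ∀ p q, p + q + 3 = N → trace (B * B * A ^ p * B * A ^ q) = 0

lemma WTraceConditions.of_uT_eq_Wstate {D N : ℕ} {M : Fin 2 → Matrix (Fin D) (Fin D) ℂ}
    (hM : uT D 2 N M = Wstate N) : WTraceConditions N (M 0) (M 1) where
  trace_pow := by
    simpa [List.count_replicate] using trace_prod_map_eq_Wstate hM (.replicate N 0) (by simp)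
  trace_mul_pow p hp := by
    simpa [List.count_replicate] using
      trace_prod_map_eq_Wstate hM (1 :: .replicate p 0) (by simp [hp])
  trace_two p q hpq := by
    have h := trace_prod_map_eq_Wstate hM (1 :: .replicate p 0 ++ 1 :: .replicate q 0)
      (by simp; omega)
    simp only [mul_assoc]
    simpa [List.count_replicate] using h
  trace_three p q hpq := by
    have h := trace_prod_map_eq_Wstate hM (1 :: 1 :: .replicate p 0 ++ 1 :: .replicate q 0)
      (by simp; omega)
    simp only [mul_assoc]
    simpa [List.count_replicate] using h

section PowerSums

variable {n : ℕ} {l m a d s x y : ℂ}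

lemma ne_zero_of_pow_add_pow_eq_zero (E0 : l ^ (n + 2) + m ^ (n + 2) = 0)
    (E1 : a * l ^ (n + 1) + d * m ^ (n + 1) = 1) : l ≠ 0 := by
  rintro rfl
  have hm : m = 0 := by simpa using E0
  simp [hm] at E1

lemma ne_of_pow_add_pow_eq_zero (E0 : l ^ (n + 2) + m ^ (n + 2) = 0)
    (E1 : a * l ^ (n + 1) + d * m ^ (n + 1) = 1) : l ≠ m := by
  rintro rfl
  exact ne_zero_of_pow_add_pow_eq_zero E0 E1 <|
    eq_zero_of_pow_eq_zero (by linear_combination E0 / 2 : l ^ (n + 2) = 0)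

lemma false_of_power_sums (E0 : l ^ (n + 4) + m ^ (n + 4) = 0)
    (E1 : a * l ^ (n + 3) + d * m ^ (n + 3) = 1)
    (E2 : a ^ 2 * l ^ (n + 2) + d ^ 2 * m ^ (n + 2) = 0)
    (E3 : a ^ 3 * l ^ (n + 1) + d ^ 3 * m ^ (n + 1) = 0) : False := by
  have h02 : l ^ (n + 2) * m ^ (n + 2) * (d * l - a * m) ^ 2 = -1 := by
    linear_combination (a ^ 2 * l ^ (n + 2) + d ^ 2 * m ^ (n + 2)) * E0
      - (a * l ^ (n + 3) + d * m ^ (n + 3) + 1) * E1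
  have h13 : a * d * (l ^ (n + 1) * m ^ (n + 1) * (d * l - a * m) ^ 2) = 0 := by
    linear_combination (a * l ^ (n + 3) + d * m ^ (n + 3)) * E3
      - (a ^ 2 * l ^ (n + 2) + d ^ 2 * m ^ (n + 2)) * E2
  have had : a * d = 0 := by linear_combination a * d * h02 - l * m * h13
  rcases mul_eq_zero.mp had with rfl | rfl
  · exact one_ne_zero (by linear_combination h02 - l ^ (n + 4) * E2 : (1 : ℂ) = 0)
  · exact one_ne_zero (by linear_combination h02 - m ^ (n + 4) * E2 : (1 : ℂ) = 0)

lemma false_of_mixed_power_sums (hs : s ≠ 0) (E0 : l ^ (n + 4) + m ^ (n + 4) = 0)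
    (E1 : a * l ^ (n + 3) + d * m ^ (n + 3) = 1)
    (F0 : x + s * (l ^ (n + 2) + m ^ (n + 2)) = 0)
    (F1 : x + s * (l ^ (n + 1) * m + m ^ (n + 1) * l) = 0)
    (F2 : x + s * (l ^ n * m ^ 2 + m ^ n * l ^ 2) = 0)
    (H0 : y + s * (a + d) * (l ^ (n + 1) + m ^ (n + 1)) = 0)
    (H1 : y + s * (a + d) * (l ^ n * m + m ^ n * l) = 0) : False := by
  have hl : l ≠ 0 := ne_zero_of_pow_add_pow_eq_zero (n := n + 2) E0 E1
  have hm : m ≠ 0 := ne_zero_of_pow_add_pow_eq_zero (n := n + 2) (l := m) (m := l) (a := d)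
    (d := a) (by linear_combination E0) (by linear_combination E1)
  have hlm : l - m ≠ 0 := sub_ne_zero.mpr (ne_of_pow_add_pow_eq_zero (n := n + 2) E0 E1)
  have hslm : s * (l - m) ≠ 0 := mul_ne_zero hs hlm
  have hA : l ^ (n + 1) = m ^ (n + 1) := by
    have h : s * (l - m) * (l ^ (n + 1) - m ^ (n + 1)) = 0 := by linear_combination F0 - F1
    exact sub_eq_zero.mp ((mul_eq_zero.mp h).resolve_left hslm)
  have hB : l ^ n * m = m ^ n * l := by
    have h : s * (l - m) * (l ^ n * m - m ^ n * l) = 0 := by linear_combination F1 - F2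
    exact sub_eq_zero.mp ((mul_eq_zero.mp h).resolve_left hslm)
  have hsq : l ^ 2 = m ^ 2 := by
    have h : m ^ n * (l ^ 2 - m ^ 2) = 0 := by linear_combination m * hA - l * hB
    exact sub_eq_zero.mp ((mul_eq_zero.mp h).resolve_left (pow_ne_zero _ hm))
  have hE : (a + d) * l ^ (n + 3) = 1 := by
    linear_combination E1 + d * l ^ 2 * hA + d * m ^ (n + 1) * hsq
  have hU : l ^ n = m ^ n := by
    have h : (a + d) * (s * (l - m)) * (l ^ n - m ^ n) = 0 := by linear_combination H0 - H1
    refine sub_eq_zero.mp ((mul_eq_zero.mp h).resolve_left (mul_ne_zero ?_ hslm))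
    exact left_ne_zero_of_mul_eq_one hE
  have h : l ^ n * (l - m) = 0 := by linear_combination hA - m * hU
  exact mul_ne_zero (pow_ne_zero _ hl) hlm h

end PowerSums

namespace WTraceConditions

lemma not_upperTriangular {N : ℕ} (hN : 3 ≤ N) (l b : ℂ) (B : Matrix (Fin 2) (Fin 2) ℂ) :
    ¬ WTraceConditions N !![l, b; 0, l] B := by
  intro h
  obtain ⟨k, rfl⟩ : ∃ k, N = k + 2 + 1 := ⟨N - 3, by omega⟩
  have hl : l = 0 := by
    simpa [upperTriangular_fin_two_pow_succ, trace_fin_two] using h.trace_pow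
  simpa [hl, upperTriangular_fin_two_pow_succ, trace_fin_two, mul_apply] using
    h.trace_mul_pow (k + 2) rfl

lemma not_diagonal {N : ℕ} (hN : 4 ≤ N) (l m : ℂ) (B : Matrix (Fin 2) (Fin 2) ℂ) :
    ¬ WTraceConditions N (diagonal ![l, m]) B := by
  intro h
  obtain ⟨n, rfl⟩ : ∃ n, N = n + 4 := ⟨N - 4, by omega⟩
  obtain ⟨a, b, c, d, rfl⟩ : ∃ a b c d, B = !![a, b; c, d] := ⟨_, _, _, _, eta_fin_two B⟩
  have E0 := h.trace_pow
  have E1 := h.trace_mul_pow (n + 3) rfl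
  have F0 := h.trace_two (n + 2) 0 rfl
  have F1 := h.trace_two (n + 1) 1 rfl
  have F2 := h.trace_two n 2 rfl
  have H0 := h.trace_three (n + 1) 0 rfl
  have H1 := h.trace_three n 1 rfl
  simp only [diagonal_pow, trace_diagonal, trace_mul_diagonal_mul_mul_diagonal]
    at E0 E1 F0 F1 F2 H0 H1
  simp only [trace_mul_diagonal] at E1
  simp [Fin.sum_univ_two] at E0 E1 F0 F1 F2 H0 H1
  rcases eq_or_ne (b * c) 0 with hs | hs
  · exact false_of_power_sums (a := a) (d := d) E0 (by linear_combination E1)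
      (by linear_combination F0 - (l ^ (n + 2) + m ^ (n + 2)) * hs)
      (by linear_combination H0 - (a * l ^ (n + 1) + d * m ^ (n + 1)
        + (a + d) * (l ^ (n + 1) + m ^ (n + 1))) * hs)
  · exact false_of_mixed_power_sums (a := a) (d := d) hs E0 (by linear_combination E1)
      (x := a ^ 2 * l ^ (n + 2) + d ^ 2 * m ^ (n + 2))
      (by linear_combination F0) (by linear_combination F1) (by linear_combination F2)
      (y := a * (a ^ 2 + b * c) * l ^ (n + 1) + d * (d ^ 2 + b * c) * m ^ (n + 1))
      (by linear_combination H0) (by linear_combination H1)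

end WTraceConditions

/-- For `N > 3`, the `W`-state is not a uniform matrix product state in `uMPS(2,2,N)`. -/
theorem stmt_14 (N : ℕ) (hN : 3 < N) : Wstate N ∉ uMPS 2 2 N := by
  rintro ⟨M, hM⟩
  obtain ⟨u, hA⟩ := exists_units_conj_eq_diagonal_or_eq_upperTriangular (M 0)
  have h := WTraceConditions.of_uT_eq_Wstate ((uT_units_conj 2 2 N M u).trans hM)
  rcases hA with ⟨l, m, hA⟩ | ⟨l, b, hA⟩
  · exact WTraceConditions.not_diagonal hN l m _ (hA ▸ h)
  · exact WTraceConditions.not_upperTriangular hN.le l b _ (hA ▸ h)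
end

section
/- uMPS(2, 2, 3) = Sym³(ℂ²): every symmetric tensor in (ℂ²)^{⊗3} can be written as T_3(M_0, M_1) for some 2×2 complex matrices M_0, M_1. -/
/-!
Over a two-letter alphabet every word of length 3 is a cyclic rotation of `0^(3-k) 1^k`, `k` being
its number of ones, so by cyclicity of the trace `T_3(A, B)` takes the value `tr(A^(3-k) B^k)` at
such a word and is symmetric. Conversely, a symmetric tensor is determined by its values on these
four sorted words, and any four complex numbers are `tr A³, tr A²B, tr AB², tr B³` for some 2×2
matrices `A, B`: explicit families, found by solving a cubic and a quadratic, cover the cases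
`tr A³ ≠ 0` and `tr A³ = tr B³ = 0 ≠ tr A²B`; exchanging `A` and `B` handles the rest.
-/

open Matrix BigOperators

theorem IsAlgClosed.exists_cubic_eq_zero {K : Type*} [Field K] [IsAlgClosed K] {a : K}
    (ha : a ≠ 0) (b c d : K) : ∃ x, a * x ^ 3 + b * x ^ 2 + c * x + d = 0 := by
  open Polynomial in
  have hdeg : (C a * X ^ 3 + C b * X ^ 2 + C c * X + C d).degree = 3 := by compute_degree!
  obtain ⟨x, hx⟩ := exists_root _ (by rw [hdeg]; decide)
  exact ⟨x, by simpa using hx⟩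

theorem IsAlgClosed.exists_quadratic_eq_zero {K : Type*} [Field K] [IsAlgClosed K] {a : K}
    (ha : a ≠ 0) (b c : K) : ∃ x, a * x ^ 2 + b * x + c = 0 := by
  open Polynomial in
  have hdeg : (C a * X ^ 2 + C b * X + C c).degree = 2 := by compute_degree!
  obtain ⟨x, hx⟩ := exists_root _ (by rw [hdeg]; decide)
  exact ⟨x, by simpa using hx⟩

section CubicTraces

variable {K : Type*} [Field K]

def CubicTracesRealizable (t₀ t₁ t₂ t₃ : K) : Prop :=
  ∃ A B : Matrix (Fin 2) (Fin 2) K,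
    trace (A ^ 3) = t₀ ∧ trace (A ^ 2 * B) = t₁ ∧ trace (A * B ^ 2) = t₂ ∧ trace (B ^ 3) = t₃

namespace CubicTracesRealizable

theorem swap {t₀ t₁ t₂ t₃ : K} (h : CubicTracesRealizable t₃ t₂ t₁ t₀) :
    CubicTracesRealizable t₀ t₁ t₂ t₃ := by
  obtain ⟨A, B, h₃, h₂, h₁, h₀⟩ := h
  exact ⟨B, A, h₀, (trace_mul_comm _ _).trans h₁, (trace_mul_comm _ _).trans h₂, h₃⟩

variable [IsAlgClosed K] [CharZero K]

/- With `A = x • 1 + E₀₁` and `B` of trace `u`, determinant `δ` and lower-left entry `r`, the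
four traces are `2x³`, `x²u + 2xr`, `x(u² - 2δ) + ru` and `u³ - 3uδ`: solve for `x`, then for `u`
(a cubic once `r` and `δ` are eliminated), `r` and `δ`, and finally for the diagonal of `B`. -/
theorem of_ne_zero {t₀ : K} (h₀ : t₀ ≠ 0) (t₁ t₂ t₃ : K) :
    CubicTracesRealizable t₀ t₁ t₂ t₃ := by
  obtain ⟨x, hx⟩ := IsAlgClosed.exists_pow_nat_eq (t₀ / 2) (by norm_num : 0 < 3)
  have hx0 : x ≠ 0 := by rintro rfl; apply h₀; linear_combination -2 * hx
  have h2x : 2 * x ≠ 0 := mul_ne_zero two_ne_zero hx0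
  obtain ⟨u, hu⟩ := IsAlgClosed.exists_cubic_eq_zero (pow_ne_zero 2 hx0)
    (-3 * t₁) (6 * x * t₂) (-4 * x ^ 2 * t₃)
  obtain ⟨r, hr⟩ : ∃ r, 2 * x * r = t₁ - x ^ 2 * u := ⟨_, mul_div_cancel₀ _ h2x⟩
  obtain ⟨δ, hδ⟩ : ∃ δ, 2 * x * δ = x * u ^ 2 + r * u - t₂ := ⟨_, mul_div_cancel₀ _ h2x⟩
  obtain ⟨p, hp⟩ := IsAlgClosed.exists_quadratic_eq_zero one_ne_zero (-u) (δ + r)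
  have hu' : u ^ 3 - 3 * δ * u = t₃ := by
    refine mul_left_cancel₀ (pow_ne_zero 2 h2x) ?_
    linear_combination hu - 3 * u ^ 2 * hr - 6 * x * u * hδ
  refine ⟨!![x, 1; 0, x], !![p, 1; r, u - p], ?_, ?_, ?_, ?_⟩ <;>
    simp only [pow_succ, pow_zero, one_mul, mul_fin_two, trace_fin_two_of]
  · linear_combination 2 * hx
  · linear_combination hr
  · linear_combination 2 * x * hp - hδ
  · linear_combination hu' + 3 * u * hp

/- `A² = t₁ • 1` gives `tr A³ = 0` and `tr A²B = t₁ tr B = t₁`; moreover `tr AB² = r + t₁q` and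
`tr B³ = 1 + 3qr` (as `tr B = 1`, `det B = -qr`), so `q` solves `3t₁q² - 3t₂q - 1 = 0`. -/
theorem of_zero_of_ne_zero {t₁ : K} (h₁ : t₁ ≠ 0) (t₂ : K) :
    CubicTracesRealizable 0 t₁ t₂ 0 := by
  obtain ⟨q, hq⟩ := IsAlgClosed.exists_quadratic_eq_zero (mul_ne_zero three_ne_zero h₁)
    (-3 * t₂) (-1)
  have hq0 : q ≠ 0 := by rintro rfl; simp at hq
  have h3q : 3 * q ≠ 0 := mul_ne_zero three_ne_zero hq0
  obtain ⟨r, hr⟩ : ∃ r, 3 * q * r = -1 := ⟨_, mul_div_cancel₀ _ h3q⟩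
  refine ⟨!![0, 1; t₁, 0], !![1, q; r, 0], ?_, ?_, ?_, ?_⟩ <;>
    simp only [pow_succ, pow_zero, one_mul, mul_fin_two, trace_fin_two_of]
  · ring
  · ring
  · refine mul_left_cancel₀ h3q ?_
    linear_combination hr + hq
  · linear_combination hr

end CubicTracesRealizable

theorem cubicTracesRealizable [IsAlgClosed K] [CharZero K] (t₀ t₁ t₂ t₃ : K) :
    CubicTracesRealizable t₀ t₁ t₂ t₃ := by
  rcases ne_or_eq t₀ 0 with h₀ | rfl
  · exact .of_ne_zero h₀ t₁ t₂ t₃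
  rcases ne_or_eq t₃ 0 with h₃ | rfl
  · exact (CubicTracesRealizable.of_ne_zero h₃ t₂ t₁ 0).swap
  rcases ne_or_eq t₁ 0 with h₁ | rfl
  · exact .of_zero_of_ne_zero h₁ t₂
  rcases ne_or_eq t₂ 0 with h₂ | rfl
  · exact (CubicTracesRealizable.of_zero_of_ne_zero h₂ 0).swap
  exact ⟨0, 0, by simp⟩

end CubicTraces

theorem hammingNorm_comp_perm {ι β : Type*} [Fintype ι] [Zero β] [DecidableEq β] (x : ι → β)
    (σ : Equiv.Perm ι) : hammingNorm (x ∘ σ) = hammingNorm x := by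
  simp only [hammingNorm, Function.comp_apply]
  exact Finset.card_equiv σ (by simp)

def sortedWord (k : ℕ) : Fin 3 → Fin 2 := fun i => if (i : ℕ) + k < 3 then 0 else 1

theorem exists_perm_comp_eq_sortedWord (v : Fin 3 → Fin 2) :
    ∃ σ : Equiv.Perm (Fin 3), v ∘ σ = sortedWord (hammingNorm v) := by
  revert v
  decide

theorem uT_three (D d : ℕ) (M : Fin d → Matrix (Fin D) (Fin D) ℂ) (v : Fin 3 → Fin d) :
    uT D d 3 M v = trace (M (v 0) * M (v 1) * M (v 2)) := by
  simp [uT, List.ofFn_succ, mul_assoc]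

theorem uT_two_three (D : ℕ) (A B : Matrix (Fin D) (Fin D) ℂ) (v : Fin 3 → Fin 2) :
    uT D 2 3 ![A, B] v = trace (A ^ (3 - hammingNorm v) * B ^ hammingNorm v) := by
  rw [uT_three]
  obtain ⟨a, b, c, rfl⟩ : ∃ a b c, v = ![a, b, c] :=
    ⟨v 0, v 1, v 2, by ext i; fin_cases i <;> rfl⟩
  fin_cases a <;> fin_cases b <;> fin_cases c <;>
    simp [hammingNorm, Finset.card_filter, Fin.sum_univ_three, pow_succ, mul_assoc] <;>
    first | (rw [trace_mul_cycle']; done) | rw [trace_mul_cycle', trace_mul_cycle']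

/-- `uMPS(2,2,3) = Sym³(ℂ²)`: the uniform matrix product states for `D = d = 2`, `N = 3`
are exactly the fully symmetric tensors in `(ℂ²)^{⊗3}`. -/
theorem stmt_16 :
    uMPS 2 2 3 = {T : (Fin 3 → Fin 2) → ℂ |
      ∀ (σ : Equiv.Perm (Fin 3)) (v : Fin 3 → Fin 2), T (v ∘ σ) = T v} := by
  ext T
  simp only [uMPS, Set.mem_range, Set.mem_ofPred_eq]
  constructor
  · rintro ⟨M, rfl⟩ σ v
    obtain ⟨A, B, rfl⟩ : ∃ A B, M = ![A, B] := ⟨M 0, M 1, funext fun i => by fin_cases i <;> rfl⟩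
    simp only [uT_two_three, hammingNorm_comp_perm]
  · intro hT
    obtain ⟨A, B, h₀, h₁, h₂, h₃⟩ := cubicTracesRealizable
      (T (sortedWord 0)) (T (sortedWord 1)) (T (sortedWord 2)) (T (sortedWord 3))
    refine ⟨![A, B], funext fun v => ?_⟩
    obtain ⟨σ, hσ⟩ := exists_perm_comp_eq_sortedWord v
    rw [uT_two_three, ← hT σ v, hσ]
    have hv : hammingNorm v ≤ 3 := hammingNorm_le_card_fintype.trans_eq (Fintype.card_fin 3)
    interval_cases hammingNorm v
    exacts [by simpa using h₀, by simpa using h₁, by simpa using h₂, by simpa using h₃]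
end
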